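/- arXiv:cs/0212053 — 2 statements merged into one kernel-verified Lean document; each statement's English description precedes it below -/
import Mathlib

section
/- With K₁ = ¬x₁, K₂ = ¬x₂, upper bound A = x₁ and lower bound B = ⊤: for every pair of variable renamings σ₁, σ₂ (each mapping variables to variables), the formula K₁σ₁ ∧ K₂σ₂ does not entail x₁ while being consistent; hence no renaming of K₁ and K₂ yields a consistent formula implying A. Equivalently, renamings of negative unit clauses can never entail a positive literal consistently. -/
/-- Propositional formulas over variables `V`. -/
inductive PF (V : Type) : Type
  | var : V → PF V
  | tru : PF V
  | fls : PF V
  | neg : PF V → PF V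
  | conj : PF V → PF V → PF V
  | disj : PF V → PF V → PF V
  | imp : PF V → PF V → PF V

namespace PF

variable {V : Type}

/-- Evaluation of a formula under a truth assignment. -/
def eval (v : V → Bool) : PF V → Bool
  | var x => v x
  | tru => true
  | fls => false
  | neg f => !(f.eval v)
  | conj f g => f.eval v && g.eval v
  | disj f g => f.eval v || g.eval v
  | imp f g => !(f.eval v) || g.eval v

/-- Uniform substitution of variables for variables (renaming). -/
def subst (σ : V → V) : PF V → PF V
  | var x => var (σ x)
  | tru => tru
  | fls => fls
  | neg f => neg (f.subst σ)
  | conj f g => conj (f.subst σ) (g.subst σ)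
  | disj f g => disj (f.subst σ) (g.subst σ)
  | imp f g => imp (f.subst σ) (g.subst σ)

/-- Generalization `τ^g_x`: substitute `true` for `x`. -/
def gen [DecidableEq V] (x : V) : PF V → PF V
  | var y => if y = x then tru else var y
  | tru => tru
  | fls => fls
  | neg f => neg (f.gen x)
  | conj f g => conj (f.gen x) (g.gen x)
  | disj f g => disj (f.gen x) (g.gen x)
  | imp f g => imp (f.gen x) (g.gen x)

/-- Particularization `τ^p_x F = x → F`. -/
def part (x : V) (F : PF V) : PF V := imp (var x) F

/-- The variables occurring in a formula. -/
def vars [DecidableEq V] : PF V → Finset V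
  | var x => {x}
  | tru => ∅
  | fls => ∅
  | neg f => f.vars
  | conj f g => f.vars ∪ g.vars
  | disj f g => f.vars ∪ g.vars
  | imp f g => f.vars ∪ g.vars

/-- Logical equivalence: same models. -/
def EquivF (F G : PF V) : Prop := ∀ v, F.eval v = G.eval v

/-- Entailment. -/
def Entails (F G : PF V) : Prop := ∀ v, F.eval v = true → G.eval v = true

/-- Satisfiability (consistency). -/
def Sat (F : PF V) : Prop := ∃ v, F.eval v = true

/-- The set of models of a formula. -/
def Mod (F : PF V) : Set (V → Bool) := {v | F.eval v = true}

/-- Biconditional. -/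
def iffF (F G : PF V) : PF V := conj (imp F G) (imp G F)

/-- Finite disjunction. -/
def bigDisj (l : List (PF V)) : PF V := l.foldr disj fls

/-- Finite conjunction. -/
def bigConj (l : List (PF V)) : PF V := l.foldr conj tru

/-- The number of models over a finite variable set. -/
def modCount [Fintype V] [DecidableEq V] (F : PF V) : ℕ :=
  (Finset.univ.filter (fun v : V → Bool => F.eval v = true)).card

end PF

open PF

/-- for `K₁ = ¬x₁`, `K₂ = ¬x₂`, every pair of renamings yields a consistent
conjunction that does not entail `x₁`: renamings of negative unit clauses can never
entail a positive literal consistently. -/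
theorem stmt8 {V : Type} (x₁ x₂ : V) (σ₁ σ₂ : V → V) :
    Sat (conj ((neg (var x₁) : PF V).subst σ₁) ((neg (var x₂)).subst σ₂)) ∧
    ¬ Entails (conj ((neg (var x₁) : PF V).subst σ₁) ((neg (var x₂)).subst σ₂)) (var x₁) := by
  constructor
  · exact ⟨fun _ => false, rfl⟩
  · intro h
    have := h (fun _ => false) rfl
    simp [eval] at this
end

section
/- If mutually inconsistent formulas K₁ = a ∧ x₁ ∧ … ∧ xₙ and K₂ = ¬a ∧ ¬x₁ ∧ … ∧ ¬xₙ are made jointly consistent by renaming variables to fresh ones, then for every variable v ∈ {a, x₁, …, xₙ}, v must be renamed (to a fresh variable) in at least one of K₁, K₂; hence at least n+1 renamings are required. -/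
open PF


lemma eval_subst {V : Type} (σ : V → V) (v : V → Bool) (F : PF V) :
    (F.subst σ).eval v = F.eval (v ∘ σ) := by
  induction F <;> simp [PF.subst, PF.eval, *]

lemma eval_bigConj {V : Type} (v : V → Bool) (l : List (PF V)) :
    (bigConj l).eval v = true ↔ ∀ F ∈ l, F.eval v = true := by
  induction l with
  | nil => simp [bigConj, PF.eval]
  | cons h t ih => simp [bigConj, PF.eval] at ih ⊢; tauto

/-- if `K₁ = a ∧ x₁ ∧ … ∧ xₙ` and `K₂ = ¬a ∧ ¬x₁ ∧ … ∧ ¬xₙ` are made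
jointly consistent by renaming variables to fresh ones, every variable is renamed in at
least one of the two, so at least `n+1` renamings are needed. -/
theorem stmt14 {V : Type} [DecidableEq V] (n : ℕ) (vs : Fin (n + 1) → V)
    (hinj : Function.Injective vs) (σ₁ σ₂ : V → V)
    (hf₁ : ∀ i, σ₁ (vs i) = vs i ∨ σ₁ (vs i) ∉ Set.range vs)
    (hf₂ : ∀ i, σ₂ (vs i) = vs i ∨ σ₂ (vs i) ∉ Set.range vs)
    (hsat : Sat (conj ((bigConj (List.ofFn fun i => (var (vs i) : PF V))).subst σ₁)
                      ((bigConj (List.ofFn fun i => (neg (var (vs i)) : PF V))).subst σ₂))) :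
    (∀ i, σ₁ (vs i) ≠ vs i ∨ σ₂ (vs i) ≠ vs i) ∧
    n + 1 ≤ (Finset.univ.filter (fun i : Fin (n + 1) => σ₁ (vs i) ≠ vs i)).card +
            (Finset.univ.filter (fun i : Fin (n + 1) => σ₂ (vs i) ≠ vs i)).card := by
  obtain ⟨v, hv⟩ := hsat
  simp only [PF.eval, Bool.and_eq_true] at hv
  obtain ⟨h1, h2⟩ := hv
  rw [eval_subst, eval_bigConj] at h1 h2
  have H1 : ∀ i, v (σ₁ (vs i)) = true := by
    intro i
    have := h1 _ (List.mem_ofFn.2 ⟨i, rfl⟩)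
    simpa [PF.eval] using this
  have H2 : ∀ i, v (σ₂ (vs i)) = false := by
    intro i
    have := h2 _ (List.mem_ofFn.2 ⟨i, rfl⟩)
    simpa [PF.eval] using this
  have key : ∀ i, σ₁ (vs i) ≠ vs i ∨ σ₂ (vs i) ≠ vs i := by
    intro i
    by_contra h
    push_neg at h
    have := H1 i
    rw [h.1, ← h.2] at this
    rw [H2 i] at this
    exact Bool.false_ne_true this
  refine ⟨key, ?_⟩
  have : (Finset.univ : Finset (Fin (n+1))) ⊆
      (Finset.univ.filter (fun i : Fin (n + 1) => σ₁ (vs i) ≠ vs i)) ∪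
      (Finset.univ.filter (fun i : Fin (n + 1) => σ₂ (vs i) ≠ vs i)) := by
    intro i _
    rcases key i with h | h <;> simp [h]
  calc n + 1 = (Finset.univ : Finset (Fin (n+1))).card := by simp
    _ ≤ _ := Finset.card_le_card this
    _ ≤ _ := Finset.card_union_le _ _
end
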